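/- arXiv:1305.0577 — 7 statements merged into one kernel-verified Lean document; each statement's English description precedes it below -/
import Mathlib

section
/- If B and D are subsets of Z_p (p an odd prime) such that every difference of two elements of B is zero or a nonzero quadratic residue, every element of D is a quadratic non-residue, and every difference of two elements of D is zero or a nonzero quadratic residue, then |B|·(|B|-1)·|D| ≤ |B|·(p-1)/2; in particular if B and D are nonempty, |B| ≤ 1 + (p-1)/(2|D|). -/
/-!
Fix `b₀ ∈ B`. The map `(b, d) ↦ (b - b₀) * d` sends `(B \ {b₀}) × D` into the non-squares, and it
is injective: from `(b₁ - b₀) d₁ = (b₂ - b₀) d₂` we get `(b₁ - b₂) d₁ = (b₂ - b₀)(d₂ - d₁)`, where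
the right side is a square and the left side is a non-square unless `b₁ = b₂`. Hence
`(|B| - 1) |D|` is at most the number of non-squares, which is at most `(p - 1) / 2` because
multiplication by a non-square embeds the non-squares into the nonzero squares.
-/

open scoped Classical

open Finset

section Field

variable {F : Type*} [Field F]

theorem not_isSquare_mul_of_isSquare {x d : F} (hx : IsSquare x) (hx₀ : x ≠ 0)
    (hd : ¬IsSquare d) : ¬IsSquare (x * d) := fun hxd ↦
  hd (by simpa only [mul_div_cancel_left₀ d hx₀] using hxd.div hx)

theorem eq_of_sub_mul_eq_sub_mul {b₀ b₁ b₂ d₁ d₂ : F} (hb₁₂ : IsSquare (b₁ - b₂))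
    (hb₂₀ : IsSquare (b₂ - b₀)) (hd₁ : ¬IsSquare d₁) (hd₂₁ : IsSquare (d₂ - d₁))
    (h : (b₁ - b₀) * d₁ = (b₂ - b₀) * d₂) : b₁ = b₂ := by
  by_contra hne
  have hrearr : (b₁ - b₂) * d₁ = (b₂ - b₀) * (d₂ - d₁) := by linear_combination h
  exact not_isSquare_mul_of_isSquare hb₁₂ (sub_ne_zero.2 hne) hd₁
    (hrearr ▸ hb₂₀.mul hd₂₁)

end Field

section FiniteField

variable {F : Type*} [Field F] [Fintype F]

theorem FiniteField.isSquare_mul_of_not_isSquare {a b : F} (ha : ¬IsSquare a)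
    (hb : ¬IsSquare b) : IsSquare (a * b) := by
  have ha₀ : a ≠ 0 := by rintro rfl; exact ha IsSquare.zero
  have hb₀ : b ≠ 0 := by rintro rfl; exact hb IsSquare.zero
  refine (quadraticChar_one_iff_isSquare (mul_ne_zero ha₀ hb₀)).1 ?_
  rw [map_mul, quadraticChar_neg_one_iff_not_isSquare.2 ha,
    quadraticChar_neg_one_iff_not_isSquare.2 hb]
  rfl

theorem FiniteField.two_mul_card_nonsquares_add_one_le :
    2 * #{x : F | ¬IsSquare x} + 1 ≤ Fintype.card F := by
  set N : Finset F := {x | ¬IsSquare x}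
  set S : Finset F := {x | x ≠ 0 ∧ IsSquare x}
  have hNS : #N ≤ #S := by
    obtain hN | ⟨d₀, hd₀⟩ := N.eq_empty_or_nonempty
    · simp [hN]
    have hd₀ : ¬IsSquare d₀ := (mem_filter.1 hd₀).2
    have hd₀₀ : d₀ ≠ 0 := by rintro rfl; exact hd₀ IsSquare.zero
    refine card_le_card_of_injOn (· * d₀) (fun x hx ↦ ?_) fun x _ y _ hxy ↦
      mul_right_cancel₀ hd₀₀ hxy
    have hx : ¬IsSquare x := (mem_filter.1 hx).2
    have hx₀ : x ≠ 0 := by rintro rfl; exact hx IsSquare.zero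
    simpa [S, hx₀, hd₀₀] using isSquare_mul_of_not_isSquare hx hd₀
  have hdisj : Disjoint N S := disjoint_filter.2 fun x _ hN hS ↦ hN hS.2
  have hsub : N ∪ S ⊆ univ.erase 0 := fun x hx ↦ by
    rcases mem_union.1 hx with hx | hx <;> simp only [N, S, mem_filter] at hx
    · exact mem_erase.2 ⟨by rintro rfl; exact hx.2 IsSquare.zero, mem_univ x⟩
    · exact mem_erase.2 ⟨hx.2.1, mem_univ x⟩
  have hcard := card_le_card hsub
  rw [card_union_of_disjoint hdisj, card_erase_of_mem (mem_univ 0), card_univ] at hcard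
  have := Fintype.card_pos (α := F)
  omega

theorem card_sub_one_mul_card_le_card_nonsquares {B D : Finset F}
    (hB : ∀ a ∈ B, ∀ b ∈ B, IsSquare (a - b)) (hD : ∀ d ∈ D, ¬IsSquare d)
    (hDD : ∀ d ∈ D, ∀ d' ∈ D, IsSquare (d - d')) :
    (#B - 1) * #D ≤ #{x : F | ¬IsSquare x} := by
  obtain rfl | ⟨b₀, hb₀⟩ := B.eq_empty_or_nonempty
  · simp
  rw [← card_erase_of_mem hb₀, ← card_product]
  refine card_le_card_of_injOn (fun q ↦ (q.1 - b₀) * q.2) (fun q hq ↦ ?_) ?_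
  · obtain ⟨hb, hd⟩ := mem_product.1 hq
    obtain ⟨hbb₀, hbB⟩ := mem_erase.1 hb
    exact mem_filter.2 ⟨mem_univ _, not_isSquare_mul_of_isSquare (hB _ hbB b₀ hb₀)
      (sub_ne_zero.2 hbb₀) (hD _ hd)⟩
  · rintro ⟨b₁, d₁⟩ hq₁ ⟨b₂, d₂⟩ hq₂ (h : (b₁ - b₀) * d₁ = (b₂ - b₀) * d₂)
    obtain ⟨hb₁, hd₁⟩ : b₁ ∈ B.erase b₀ ∧ d₁ ∈ D := mem_product.1 hq₁
    obtain ⟨hb₂, hd₂⟩ : b₂ ∈ B.erase b₀ ∧ d₂ ∈ D := mem_product.1 hq₂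
    obtain ⟨hb₁b₀, hb₁B⟩ := mem_erase.1 hb₁
    have hb₂B := mem_of_mem_erase hb₂
    obtain rfl := eq_of_sub_mul_eq_sub_mul (hB _ hb₁B _ hb₂B) (hB _ hb₂B _ hb₀) (hD _ hd₁)
      (hDD _ hd₂ _ hd₁) h
    rw [mul_left_cancel₀ (sub_ne_zero.2 hb₁b₀) h]

theorem card_sub_one_mul_card_le {B D : Finset F}
    (hB : ∀ a ∈ B, ∀ b ∈ B, IsSquare (a - b)) (hD : ∀ d ∈ D, ¬IsSquare d)
    (hDD : ∀ d ∈ D, ∀ d' ∈ D, IsSquare (d - d')) :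
    ((#B : ℚ) - 1) * #D ≤ ((Fintype.card F : ℚ) - 1) / 2 := by
  have hN : (2 * #{x : F | ¬IsSquare x} + 1 : ℚ) ≤ Fintype.card F := by
    exact_mod_cast FiniteField.two_mul_card_nonsquares_add_one_le
  obtain rfl | hBne := B.eq_empty_or_nonempty
  · simp only [card_empty, Nat.cast_zero, zero_sub, neg_one_mul]
    linarith [(#D).cast_nonneg (α := ℚ)]
  have hBD : ((#B - 1 : ℕ) * #D : ℚ) ≤ #{x : F | ¬IsSquare x} := by
    exact_mod_cast card_sub_one_mul_card_le_card_nonsquares hB hD hDD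
  rw [Nat.cast_sub hBne.card_pos, Nat.cast_one] at hBD
  linarith

end FiniteField

theorem stmt_0_general (p : ℕ) (hp : p.Prime)
    (B D : Finset (ZMod p))
    (hB : ∀ a ∈ B, ∀ b ∈ B, a - b = 0 ∨ (a - b ≠ 0 ∧ IsSquare (a - b)))
    (hD : ∀ d ∈ D, d ≠ 0 ∧ ¬ IsSquare d)
    (hDD : ∀ d ∈ D, ∀ d' ∈ D, d - d' = 0 ∨ (d - d' ≠ 0 ∧ IsSquare (d - d'))) :
    (B.card : ℚ) * ((B.card : ℚ) - 1) * D.card ≤ (B.card : ℚ) * ((p : ℚ) - 1) / 2 ∧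
      (B.Nonempty → D.Nonempty →
        (B.card : ℚ) ≤ 1 + ((p : ℚ) - 1) / (2 * D.card)) := by
  have := Fact.mk hp
  have isSquare_of_zero_or {x : ZMod p} (h : x = 0 ∨ (x ≠ 0 ∧ IsSquare x)) : IsSquare x :=
    h.elim (fun h ↦ h ▸ IsSquare.zero) And.right
  have key := card_sub_one_mul_card_le (fun a ha b hb ↦ isSquare_of_zero_or (hB a ha b hb))
    (fun d hd ↦ (hD d hd).2) fun d hd d' hd' ↦ isSquare_of_zero_or (hDD d hd d' hd')
  rw [ZMod.card] at key
  refine ⟨?_, fun _ hDne ↦ ?_⟩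
  · rw [mul_assoc, mul_div_assoc]
    exact mul_le_mul_of_nonneg_left key (Nat.cast_nonneg _)
  · have hD₀ : (0 : ℚ) < 2 * D.card := by positivity
    rw [← sub_le_iff_le_add', le_div_iff₀ hD₀]
    linarith

theorem stmt_0 (p : ℕ) (hp : p.Prime) (hodd : p ≠ 2)
    (B D : Finset (ZMod p))
    (hB : ∀ a ∈ B, ∀ b ∈ B, a - b = 0 ∨ (a - b ≠ 0 ∧ IsSquare (a - b)))
    (hD : ∀ d ∈ D, d ≠ 0 ∧ ¬ IsSquare d)
    (hDD : ∀ d ∈ D, ∀ d' ∈ D, d - d' = 0 ∨ (d - d' ≠ 0 ∧ IsSquare (d - d'))) :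
    (B.card : ℚ) * ((B.card : ℚ) - 1) * D.card ≤ (B.card : ℚ) * ((p : ℚ) - 1) / 2 ∧
      (B.Nonempty → D.Nonempty →
        (B.card : ℚ) ≤ 1 + ((p : ℚ) - 1) / (2 * D.card)) :=
  stmt_0_general p hp B D hB hD hDD
end

section
/- Let B ⊆ F_q be a maximal set (with respect to inclusion) such that B - B ⊆ Q ∪ {0}, and let φ(t) = Σ_{b∈B} χ(b - t). Then for every t ∉ B one has φ(t) ≤ |B| - 2. -/
/-
If -1 is a square (here because q ≡ 1 mod 4), a point t whose differences to all of B are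
squares could be added to B, so maximality forces some b - t to be a non-square; that one term
contributes -1 instead of at most 1.
-/

open scoped Classical

/-- The quadratic character: 0 at 0, 1 on nonzero squares, -1 on non-squares. -/
noncomputable def quadChar {F : Type*} [Field F] (x : F) : ℤ :=
  if x = 0 then 0 else if IsSquare x then 1 else -1

section SquareDifferences

variable {R : Type*} [CommRing R]

/-- `C - C ⊆ Q ∪ {0}`, with `Q` the nonzero squares. -/
def HasSquareDifferences (C : Finset R) : Prop :=
  ∀ c₁ ∈ C, ∀ c₂ ∈ C, c₁ ≠ c₂ → c₁ - c₂ ≠ 0 ∧ IsSquare (c₁ - c₂)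

theorem HasSquareDifferences.insert (hneg : IsSquare (-1 : R)) {B : Finset R}
    (hB : HasSquareDifferences B) {t : R} (ht : ∀ b ∈ B, IsSquare (b - t)) :
    HasSquareDifferences (insert t B) := by
  intro c₁ h₁ c₂ h₂ hne
  refine ⟨sub_ne_zero.mpr hne, ?_⟩
  rcases Finset.mem_insert.mp h₁ with rfl | hc₁
  · rcases Finset.mem_insert.mp h₂ with rfl | hc₂
    · exact absurd rfl hne
    · simpa using hneg.mul (ht c₂ hc₂)
  · rcases Finset.mem_insert.mp h₂ with rfl | hc₂
    · exact ht c₁ hc₁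
    · exact (hB c₁ hc₁ c₂ hc₂ hne).2

theorem exists_not_isSquare_sub_of_maximal (hneg : IsSquare (-1 : R)) {B : Finset R}
    (hB : HasSquareDifferences B)
    (hmax : ∀ C : Finset R, HasSquareDifferences C → B ⊆ C → C = B) {t : R} (ht : t ∉ B) :
    ∃ b ∈ B, ¬IsSquare (b - t) := by
  by_contra! hall
  have hC := hmax _ (hB.insert hneg hall) (Finset.subset_insert t B)
  exact ht (hC ▸ Finset.mem_insert_self t B)

end SquareDifferences

section QuadChar

variable {F : Type*} [Field F]

theorem quadChar_le_one (x : F) : quadChar x ≤ 1 := by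
  unfold quadChar
  split_ifs <;> norm_num

theorem quadChar_of_not_isSquare {x : F} (hx : ¬IsSquare x) : quadChar x = -1 := by
  have hx0 : x ≠ 0 := fun h => hx (h ▸ IsSquare.zero)
  simp [quadChar, hx0, hx]

end QuadChar

theorem Finset.sum_le_card_sub_two_of_eq_neg_one {ι : Type*} {s : Finset ι} {f : ι → ℤ}
    (hf : ∀ i ∈ s, f i ≤ 1) {a : ι} (ha : a ∈ s) (hfa : f a = -1) :
    ∑ i ∈ s, f i ≤ (s.card : ℤ) - 2 := by
  have hrest : ∑ i ∈ s.erase a, f i ≤ ((s.erase a).card : ℤ) := by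
    simpa using Finset.sum_le_card_nsmul (s.erase a) f 1
      fun i hi => hf i (Finset.mem_of_mem_erase hi)
  rw [← Finset.sum_erase_add s f ha, hfa]
  rw [Finset.card_erase_of_mem ha, Nat.cast_sub (Finset.card_pos.mpr ⟨a, ha⟩)] at hrest
  push_cast at hrest
  linarith

theorem stmt_5 {F : Type*} [Field F] [Fintype F]
    (hq : Fintype.card F % 4 = 1) (B : Finset F)
    (hB : ∀ b₁ ∈ B, ∀ b₂ ∈ B, b₁ ≠ b₂ → b₁ - b₂ ≠ 0 ∧ IsSquare (b₁ - b₂))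
    (hmax : ∀ C : Finset F,
      (∀ c₁ ∈ C, ∀ c₂ ∈ C, c₁ ≠ c₂ → c₁ - c₂ ≠ 0 ∧ IsSquare (c₁ - c₂)) →
      B ⊆ C → C = B)
    (t : F) (ht : t ∉ B) :
    ∑ b ∈ B, quadChar (b - t) ≤ (B.card : ℤ) - 2 := by
  have hneg : IsSquare (-1 : F) := FiniteField.isSquare_neg_one_iff.mpr (by omega)
  obtain ⟨b₀, hb₀, hns⟩ := exists_not_isSquare_sub_of_maximal hneg hB hmax ht
  exact Finset.sum_le_card_sub_two_of_eq_neg_one (fun b _ => quadChar_le_one (b - t)) hb₀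
    (quadChar_of_not_isSquare hns)
end

section
/- Let B ⊆ F_q with B - B ⊆ Q ∪ {0} and |B| = s, and φ(t) = Σ_{b∈B} χ(b - t). Then for every t ∉ B, φ(t) ≡ s (mod 2). -/
open scoped Classical

theorem quadChar_modEq_one {F : Type*} [Field F] {x : F} (hx : x ≠ 0) :
    quadChar x ≡ 1 [ZMOD 2] := by
  unfold quadChar
  rw [if_neg hx]
  split_ifs <;> decide

theorem stmt_6_general {F : Type*} [Field F]
    (B : Finset F)
    (t : F) (ht : t ∉ B) :
    (∑ b ∈ B, quadChar (b - t)) ≡ (B.card : ℤ) [ZMOD 2] :=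
  calc (∑ b ∈ B, quadChar (b - t)) ≡ ∑ _b ∈ B, 1 [ZMOD 2] :=
        Int.ModEq.sum fun b hb => quadChar_modEq_one (sub_ne_zero.mpr (ne_of_mem_of_not_mem hb ht))
    _ = B.card := by simp

theorem stmt_6 {F : Type*} [Field F] [Fintype F]
    (hq : Fintype.card F % 4 = 1) (B : Finset F)
    (hB : ∀ b₁ ∈ B, ∀ b₂ ∈ B, b₁ ≠ b₂ → b₁ - b₂ ≠ 0 ∧ IsSquare (b₁ - b₂))
    (t : F) (ht : t ∉ B) :
    (∑ b ∈ B, quadChar (b - t)) ≡ (B.card : ℤ) [ZMOD 2] :=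
  stmt_6_general B t ht
end

section
/- Let B ⊆ F_q with B - B ⊆ Q ∪ {0}, |B| = s, and φ₁(t) = 1 + Σ_{b∈B} χ(b - t). Then Σ_{t ∉ B} φ₁(t)² = (s+1)(q - s²). -/
/-!
Write `χ` for the quadratic character and `φ(t) = 1 + ∑_{b ∈ B} χ(b - t)`. Summing `φ(t)²` over
all of `F_q` only needs the character sums `∑_t χ(b - t) = 0` and, for `b ≠ b'`,
`∑_t χ(b - t) χ(b' - t) = -1` (a Jacobi sum `J(χ, χ⁻¹) = -χ(-1)` after an affine substitution),
which give `(s + 1) q - s²` for any `B` of size `s`. When all differences in `B` are squares,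
`φ = s` on `B`, and removing those `s` terms leaves `(s + 1) q - s² - s³ = (s + 1)(q - s²)`.
-/

open scoped Classical

open Finset

lemma quadChar_eq_quadraticChar {F : Type*} [Field F] [Fintype F] :
    (quadChar : F → ℤ) = quadraticChar F := by
  ext x
  rw [quadraticChar_apply, quadraticCharFun, quadChar]
  split_ifs <;> rfl

namespace MulChar

variable {F R : Type*} [Field F] [Fintype F] [CommRing R] {χ : MulChar F R}

lemma sum_apply_sub_mul_inv_apply_sub_self (χ : MulChar F R) (a : F) :
    ∑ t, χ (a - t) * χ⁻¹ (a - t) = Fintype.card F - 1 := by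
  have : ∑ t, χ (a - t) * χ⁻¹ (a - t) = ∑ x, (1 : MulChar F R) x := by
    rw [← mul_inv_cancel χ]
    exact Fintype.sum_equiv (Equiv.subLeft a) _ _ fun _ ↦ rfl
  rw [this, sum_one_eq_card_units, Fintype.card_units, Nat.cast_sub Fintype.card_pos, Nat.cast_one]

variable [IsDomain R]

lemma sum_apply_sub_eq_zero (hχ : χ ≠ 1) (a : F) : ∑ t, χ (a - t) = 0 := by
  rw [← sum_eq_zero_of_ne_one hχ]
  exact Fintype.sum_equiv (Equiv.subLeft a) _ _ fun _ ↦ rfl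

lemma sum_apply_sub_mul_inv_apply_sub (hχ : χ ≠ 1) {a b : F} (hab : a ≠ b) :
    ∑ t, χ (a - t) * χ⁻¹ (b - t) = -1 := by
  have hd : b - a ≠ 0 := sub_ne_zero.mpr hab.symm
  have hχd : χ (b - a) * χ⁻¹ (b - a) = 1 := by
    rw [inv_apply', ← map_mul, mul_inv_cancel₀ hd, map_one]
  -- the substitution `t = a + (b - a) x` turns the sum into `χ (-1)` times a Jacobi sum
  calc ∑ t, χ (a - t) * χ⁻¹ (b - t)
      = ∑ x, χ (-1) * (χ x * χ⁻¹ (1 - x)) := by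
        refine (Fintype.sum_equiv ((Equiv.mulLeft₀ _ hd).trans (Equiv.addLeft a)) _ _
          fun x ↦ ?_).symm
        simp only [Equiv.trans_apply, Equiv.mulLeft₀_apply, Equiv.coe_addLeft]
        rw [show a - (a + (b - a) * x) = -1 * (b - a) * x by ring,
          show b - (a + (b - a) * x) = (b - a) * (1 - x) by ring]
        simp only [map_mul]
        linear_combination -(χ (-1) * χ x * χ⁻¹ (1 - x)) * hχd
    _ = χ (-1) * jacobiSum χ χ⁻¹ := by rw [jacobiSum, mul_sum]
    _ = -1 := by
        rw [jacobiSum_nontrivial_inv hχ, mul_neg, ← map_mul, neg_one_mul, neg_neg, map_one]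

lemma sum_one_add_sum_apply_sub_mul (hχ : χ ≠ 1) (B : Finset F) :
    ∑ t, (1 + ∑ b ∈ B, χ (b - t)) * (1 + ∑ b ∈ B, χ⁻¹ (b - t)) =
      (#B + 1) * Fintype.card F - #B ^ 2 := by
  have hχinv : χ⁻¹ ≠ 1 := inv_ne_one.mpr hχ
  have hrow : ∀ a ∈ B, ∑ b ∈ B, ∑ t, χ (a - t) * χ⁻¹ (b - t) = Fintype.card F - #B := by
    intro a ha
    rw [← add_sum_erase _ _ ha, sum_apply_sub_mul_inv_apply_sub_self,
      sum_congr rfl fun b hb ↦ sum_apply_sub_mul_inv_apply_sub hχ (ne_of_mem_erase hb).symm,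
      sum_const, card_erase_of_mem ha, nsmul_eq_mul, Nat.cast_sub (card_pos.mpr ⟨a, ha⟩)]
    push_cast
    ring
  have hexpand : ∀ t, (1 + ∑ b ∈ B, χ (b - t)) * (1 + ∑ b ∈ B, χ⁻¹ (b - t)) =
      1 + ∑ b ∈ B, χ (b - t) + ∑ b ∈ B, χ⁻¹ (b - t) +
        ∑ a ∈ B, ∑ b ∈ B, χ (a - t) * χ⁻¹ (b - t) := fun t ↦ by
    rw [← sum_mul_sum]; ring
  simp only [hexpand, sum_add_distrib]
  rw [sum_comm (s := univ), sum_comm (s := univ), sum_comm (s := univ),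
    sum_congr rfl fun a _ ↦ sum_comm, sum_congr rfl hrow]
  simp only [sum_apply_sub_eq_zero hχ, sum_apply_sub_eq_zero hχinv, sum_const, card_univ,
    nsmul_eq_mul]
  ring

end MulChar

section QuadraticChar

variable {F : Type*} [Field F] [Fintype F]

lemma sum_sq_one_add_sum_quadraticChar_sub (hF : ringChar F ≠ 2) (B : Finset F) :
    ∑ t, (1 + ∑ b ∈ B, quadraticChar F (b - t)) ^ 2 =
      ((#B : ℤ) + 1) * Fintype.card F - (#B : ℤ) ^ 2 := by
  have h := (quadraticChar F).sum_one_add_sum_apply_sub_mul (quadraticChar_ne_one hF) B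
  rwa [quadraticChar_isQuadratic F |>.inv, ← sum_congr rfl fun t _ ↦ sq _] at h

lemma one_add_sum_quadraticChar_sub_of_mem {B : Finset F}
    (hB : ∀ b₁ ∈ B, ∀ b₂ ∈ B, b₁ ≠ b₂ → IsSquare (b₁ - b₂)) {t : F} (ht : t ∈ B) :
    1 + ∑ b ∈ B, quadraticChar F (b - t) = #B := by
  have hsq : ∀ b ∈ B.erase t, quadraticChar F (b - t) = 1 := fun b hb ↦
    have hbt := ne_of_mem_erase hb
    (quadraticChar_one_iff_isSquare (sub_ne_zero.mpr hbt)).mpr (hB b (mem_of_mem_erase hb) t ht hbt)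
  rw [← add_sum_erase _ _ ht, sub_self, quadraticChar_zero, sum_congr rfl hsq, sum_const,
    card_erase_of_mem ht, nsmul_one, Nat.cast_sub (card_pos.mpr ⟨t, ht⟩)]
  push_cast
  ring

end QuadraticChar

theorem stmt_8 {F : Type*} [Field F] [Fintype F]
    (hq : Fintype.card F % 4 = 1) (B : Finset F)
    (hB : ∀ b₁ ∈ B, ∀ b₂ ∈ B, b₁ ≠ b₂ → b₁ - b₂ ≠ 0 ∧ IsSquare (b₁ - b₂)) :
    ∑ t ∈ Bᶜ, (1 + ∑ b ∈ B, quadChar (b - t)) ^ 2 =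
      ((B.card : ℤ) + 1) * ((Fintype.card F : ℤ) - (B.card : ℤ) ^ 2) := by
  have hF : ringChar F ≠ 2 := fun h ↦ by
    have := FiniteField.even_card_of_char_two h
    omega
  have hB' : ∀ b₁ ∈ B, ∀ b₂ ∈ B, b₁ ≠ b₂ → IsSquare (b₁ - b₂) :=
    fun b₁ h₁ b₂ h₂ hne ↦ (hB b₁ h₁ b₂ h₂ hne).2
  have hsplit := sum_add_sum_compl B fun t ↦ (1 + ∑ b ∈ B, quadraticChar F (b - t)) ^ 2
  rw [sum_sq_one_add_sum_quadraticChar_sub hF,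
    sum_congr rfl fun t ht ↦ by rw [one_add_sum_quadraticChar_sub_of_mem hB' ht],
    sum_const, nsmul_eq_mul] at hsplit
  rw [quadChar_eq_quadraticChar]
  linear_combination hsplit
end

section
/- If B ⊆ F_q satisfies B - B ⊆ Q ∪ {0}, then |B|² ≤ q. -/
/-!
Fix a nonsquare `g`. If `a + g b = c + g d` with `a, b, c, d ∈ B` and `b ≠ d`, then
`g = (a - c) / (d - b)` is a quotient of squares, hence a square. So `(a, b) ↦ a + g b` is injective
on `B × B`, and `|B|² ≤ q`. A nonsquare exists as soon as `q` is odd.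
-/

theorem isSquare_of_mul_eq_of_isSquare {F : Type*} [Field F] {g x y : F}
    (hx : IsSquare x) (hy : IsSquare y) (hy0 : y ≠ 0) (h : x = g * y) : IsSquare g := by
  have hg : g = x / y := by rw [h, mul_div_cancel_right₀ _ hy0]
  exact hg ▸ hx.div hy

theorem injOn_add_mul_of_not_isSquare {F : Type*} [Field F] {g : F} (hg : ¬IsSquare g)
    {B : Set F} (hB : ∀ a ∈ B, ∀ b ∈ B, IsSquare (a - b)) :
    Set.InjOn (fun p : F × F => p.1 + g * p.2) (B ×ˢ B) := by
  rintro ⟨a, b⟩ ⟨ha, hb⟩ ⟨c, d⟩ ⟨hc, hd⟩ (h : a + g * b = c + g * d)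
  obtain rfl : b = d := by
    by_contra hbd
    exact hg (isSquare_of_mul_eq_of_isSquare (hB a ha c hc) (hB d hd b hb)
      (sub_ne_zero.2 (Ne.symm hbd)) (by linear_combination h))
  obtain rfl : a = c := by linear_combination h
  rfl

theorem card_sq_le_card_of_sub_isSquare {F : Type*} [Field F] [Fintype F] {g : F}
    (hg : ¬IsSquare g) {B : Finset F} (hB : ∀ a ∈ B, ∀ b ∈ B, IsSquare (a - b)) :
    B.card ^ 2 ≤ Fintype.card F := by
  classical
  have hinj : Set.InjOn (fun p : F × F => p.1 + g * p.2) ↑(B ×ˢ B) := by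
    rw [Finset.coe_product]
    exact injOn_add_mul_of_not_isSquare hg hB
  calc B.card ^ 2 = (B ×ˢ B).card := by rw [Finset.card_product, sq]
    _ = ((B ×ˢ B).image fun p : F × F => p.1 + g * p.2).card := (Finset.card_image_of_injOn hinj).symm
    _ ≤ Fintype.card F := Finset.card_le_univ _

theorem stmt_9 {F : Type*} [Field F] [Fintype F]
    (hq : Fintype.card F % 4 = 1) (B : Finset F)
    (hB : ∀ b₁ ∈ B, ∀ b₂ ∈ B, b₁ ≠ b₂ → b₁ - b₂ ≠ 0 ∧ IsSquare (b₁ - b₂)) :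
    B.card ^ 2 ≤ Fintype.card F := by
  have hchar : ringChar F ≠ 2 := fun h => by
    have := FiniteField.even_card_of_char_two h
    omega
  obtain ⟨g, hg⟩ := FiniteField.exists_nonsquare hchar
  refine card_sq_le_card_of_sub_isSquare hg fun a ha b hb => ?_
  rcases eq_or_ne a b with rfl | hab
  · exact ⟨0, by rw [sub_self, mul_zero]⟩
  · exact (hB a ha b hb hab).2
end

section
/- Let q = p^k with k odd, q ≡ 1 (mod 4), and let s be the maximal size of a set B ⊆ F_q with B - B ⊆ Q ∪ {0}. If ⌊√q⌋ is even then s² + s - 1 ≤ q. -/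
/-!
Let `χ` be the quadratic character of `F` (of odd order `q`) and let `B` be a set all of whose
differences are squares. Put `f x = ∑ b ∈ B, χ (x - b)`. Orthogonality of `χ` gives
`∑ f = 0` and `∑ f ^ 2 = |B| (q - |B|)`, while `f = |B| - 1` on `B`. Off `B`, `f` is an integer,
so `f (f + 1) ≥ 0`; it has the parity of `|B|`, so `f (f + 2) ≥ 0` when `|B|` is even. Summing
over the complement of `B` yields `|B| ^ 2 ≤ q`, and `|B| ^ 2 + |B| - 1 ≤ q` for even `|B|`.
For odd `|B|` the first bound gives `|B| ≤ ⌊√q⌋`, hence `|B| + 1 ≤ ⌊√q⌋` as `⌊√q⌋` is even.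
-/

open Finset

section QuadraticCharSums

variable {F : Type*} [Field F] [Fintype F] [DecidableEq F]

theorem sum_quadraticChar_sq : ∑ x : F, quadraticChar F x ^ 2 = Fintype.card F - 1 := by
  have h : ∀ x : F, quadraticChar F x ^ 2 = 1 - if x = 0 then 1 else 0 := by
    intro x
    split_ifs with hx
    · simp [hx]
    · rw [quadraticChar_sq_one hx, sub_zero]
  rw [Finset.sum_congr rfl fun x _ => h x, Finset.sum_sub_distrib]
  simp

theorem sum_quadraticChar_mul_add_one (hF : ringChar F ≠ 2) :
    ∑ x : F, quadraticChar F x * quadraticChar F (x + 1) = -1 := by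
  set χ := quadraticChar F
  have hJ : ∑ x : F, χ x * χ (1 - x) = -χ (-1) := by
    simpa only [jacobiSum, (quadraticChar_isQuadratic F).inv] using
      jacobiSum_nontrivial_inv (quadraticChar_ne_one hF)
  calc ∑ x : F, χ x * χ (x + 1)
      = ∑ x : F, χ (-x) * χ (-x + 1) := (Equiv.sum_comp (Equiv.neg F) _).symm
    _ = χ (-1) * ∑ x : F, χ x * χ (1 - x) := by
      rw [Finset.mul_sum]
      refine Finset.sum_congr rfl fun x _ => ?_
      rw [neg_eq_neg_one_mul x, neg_one_mul, neg_add_eq_sub, ← neg_one_mul x, map_mul]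
      ring
    _ = -χ (-1) ^ 2 := by rw [hJ]; ring
    _ = -1 := by rw [quadraticChar_sq_one (neg_ne_zero.mpr one_ne_zero)]

theorem sum_quadraticChar_mul_add (hF : ringChar F ≠ 2) (a : F) :
    ∑ x : F, quadraticChar F x * quadraticChar F (x + a) =
      if a = 0 then (Fintype.card F : ℤ) - 1 else -1 := by
  set χ := quadraticChar F
  split_ifs with ha
  · simpa only [ha, add_zero, ← sq] using sum_quadraticChar_sq
  calc ∑ x : F, χ x * χ (x + a)
      = ∑ x : F, χ (a * x) * χ (a * x + a) := (Equiv.sum_comp (Equiv.mulLeft₀ a ha) _).symm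
    _ = χ a ^ 2 * ∑ x : F, χ x * χ (x + 1) := by
      rw [Finset.mul_sum]
      refine Finset.sum_congr rfl fun x _ => ?_
      rw [← mul_add_one, map_mul, map_mul]
      ring
    _ = -1 := by rw [quadraticChar_sq_one ha, sum_quadraticChar_mul_add_one hF, one_mul]

theorem sum_quadraticChar_sub_mul_sub (hF : ringChar F ≠ 2) (b b' : F) :
    ∑ x : F, quadraticChar F (x - b) * quadraticChar F (x - b') =
      (if b = b' then (Fintype.card F : ℤ) else 0) - 1 := by
  have h := Equiv.sum_comp (Equiv.subRight b)
    fun y => quadraticChar F y * quadraticChar F (y + (b - b'))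
  simp only [Equiv.subRight_apply, sub_add_sub_cancel] at h
  rw [h, sum_quadraticChar_mul_add hF]
  simp only [sub_eq_zero]
  split_ifs <;> ring

def quadCharSum (B : Finset F) (x : F) : ℤ := ∑ b ∈ B, quadraticChar F (x - b)

theorem sum_quadCharSum (hF : ringChar F ≠ 2) (B : Finset F) : ∑ x, quadCharSum B x = 0 := by
  unfold quadCharSum
  rw [Finset.sum_comm]
  refine Finset.sum_eq_zero fun b _ => ?_
  exact (Equiv.sum_comp (Equiv.subRight b) (quadraticChar F)).trans (quadraticChar_sum_zero hF)

theorem sum_quadCharSum_sq (hF : ringChar F ≠ 2) (B : Finset F) :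
    ∑ x, quadCharSum B x ^ 2 = #B * (Fintype.card F - #B) := by
  calc ∑ x, quadCharSum B x ^ 2
      = ∑ b ∈ B, ∑ b' ∈ B, ∑ x, quadraticChar F (x - b) * quadraticChar F (x - b') := by
        simp only [quadCharSum, sq, Finset.sum_mul_sum]
        rw [Finset.sum_comm]
        simp only [Finset.sum_comm (s := univ)]
    _ = ∑ b ∈ B, ∑ b' ∈ B, ((if b = b' then (Fintype.card F : ℤ) else 0) - 1) := by
        simp only [sum_quadraticChar_sub_mul_sub hF]
    _ = #B * (Fintype.card F - #B) := by
        simp only [Finset.sum_sub_distrib, Finset.sum_ite_eq, Finset.sum_ite_mem, Finset.inter_self,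
          Finset.sum_const, nsmul_eq_mul, mul_one]
        ring

theorem quadCharSum_of_mem {B : Finset F} (hB : (B : Set F).Pairwise fun a b => IsSquare (a - b))
    {x : F} (hx : x ∈ B) : quadCharSum B x = #B - 1 := by
  have hsq : ∀ b ∈ B.erase x, quadraticChar F (x - b) = 1 := fun b hb => by
    obtain ⟨hbx, hb⟩ := Finset.mem_erase.mp hb
    exact (quadraticChar_one_iff_isSquare (sub_ne_zero.mpr hbx.symm)).mpr (hB hx hb hbx.symm)
  rw [quadCharSum, ← Finset.add_sum_erase B _ hx, sub_self, MulChar.map_zero, zero_add,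
    Finset.sum_congr rfl hsq, Finset.sum_const, Finset.card_erase_of_mem hx, nsmul_one,
    Nat.cast_pred (Finset.card_pos.mpr ⟨x, hx⟩)]

theorem even_quadCharSum_add_card {B : Finset F} {x : F} (hx : x ∉ B) :
    Even (quadCharSum B x + #B) := by
  rw [quadCharSum, Finset.card_eq_sum_ones, Nat.cast_sum, ← Finset.sum_add_distrib]
  refine Finset.even_sum _ fun b hb => ?_
  have hxb : x - b ≠ 0 := sub_ne_zero.mpr (ne_of_mem_of_not_mem hb hx).symm
  rcases quadraticChar_dichotomy hxb with h | h <;> simp [h]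

theorem sum_compl_quadCharSum_mul_add (hF : ringChar F ≠ 2) {B : Finset F}
    (hB : (B : Set F).Pairwise fun a b => IsSquare (a - b)) (c : ℤ) :
    ∑ x ∈ Bᶜ, quadCharSum B x * (quadCharSum B x + c) =
      #B * (Fintype.card F - #B - (#B - 1) * (#B - 1 + c)) := by
  have htotal : ∑ x, quadCharSum B x * (quadCharSum B x + c) = #B * (Fintype.card F - #B) := by
    simp only [mul_add, Finset.sum_add_distrib, ← sq, ← Finset.sum_mul, sum_quadCharSum_sq hF,
      sum_quadCharSum hF, zero_mul, add_zero]
  have hinside : ∑ x ∈ B, quadCharSum B x * (quadCharSum B x + c) =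
      #B * ((#B - 1) * (#B - 1 + c)) := by
    rw [Finset.sum_congr rfl fun x hx => by rw [quadCharSum_of_mem hB hx], Finset.sum_const,
      nsmul_eq_mul]
  rw [← Finset.sum_compl_add_sum B] at htotal
  linear_combination htotal - hinside

theorem card_add_mul_le_of_forall_nonneg (hF : ringChar F ≠ 2) {B : Finset F}
    (hB : (B : Set F).Pairwise fun a b => IsSquare (a - b)) (hne : B.Nonempty) (c : ℤ)
    (h : ∀ x ∉ B, 0 ≤ quadCharSum B x * (quadCharSum B x + c)) :
    #B + (#B - 1) * (#B - 1 + c) ≤ (Fintype.card F : ℤ) := by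
  have hsum := Finset.sum_nonneg fun x hx => h x (Finset.mem_compl.mp hx)
  rw [sum_compl_quadCharSum_mul_add hF hB c] at hsum
  have := nonneg_of_mul_nonneg_right hsum (by exact_mod_cast hne.card_pos)
  linarith

theorem card_sq_le (hF : ringChar F ≠ 2) {B : Finset F}
    (hB : (B : Set F).Pairwise fun a b => IsSquare (a - b)) :
    (#B : ℤ) ^ 2 ≤ Fintype.card F := by
  rcases B.eq_empty_or_nonempty with rfl | hne
  · simp
  have := card_add_mul_le_of_forall_nonneg hF hB hne 1 fun x _ => ?_
  · linear_combination this
  rcases le_or_gt 0 (quadCharSum B x) with h | h <;> nlinarith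

theorem card_sq_add_card_sub_one_le (hF : ringChar F ≠ 2) {B : Finset F}
    (hB : (B : Set F).Pairwise fun a b => IsSquare (a - b)) (heven : Even #B) :
    (#B : ℤ) ^ 2 + #B - 1 ≤ Fintype.card F := by
  rcases B.eq_empty_or_nonempty with rfl | hne
  · simp
  have := card_add_mul_le_of_forall_nonneg hF hB hne 2 fun x hx => ?_
  · linear_combination this
  obtain ⟨m, hm⟩ := (Int.even_add.mp (even_quadCharSum_add_card hx)).mpr (by exact_mod_cast heven)
  rw [hm]
  rcases le_or_gt 0 m with h | h <;> nlinarith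

end QuadraticCharSums

theorem stmt_10_general {F : Type*} [Field F] [Fintype F] (s : ℕ)
    (hq : Fintype.card F % 4 = 1)
    (hs : IsGreatest {n : ℕ | ∃ B : Finset F,
      (∀ b₁ ∈ B, ∀ b₂ ∈ B, b₁ ≠ b₂ → b₁ - b₂ ≠ 0 ∧ IsSquare (b₁ - b₂)) ∧
      B.card = n} s)
    (heven : Even (Nat.sqrt (Fintype.card F))) :
    (s : ℤ) ^ 2 + s - 1 ≤ (Fintype.card F : ℤ) := by
  classical
  have hF : ringChar F ≠ 2 := fun h => by
    have := FiniteField.even_card_of_char_two h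
    omega
  obtain ⟨B, hB, rfl⟩ := hs.1
  have hclique : (B : Set F).Pairwise fun a b => IsSquare (a - b) :=
    fun a ha b hb hab => (hB a ha b hb hab).2
  rcases Nat.even_or_odd #B with hBeven | hBodd
  · exact card_sq_add_card_sub_one_le hF hclique hBeven
  have hle : #B ≤ Nat.sqrt (Fintype.card F) :=
    Nat.le_sqrt'.mpr (by exact_mod_cast card_sq_le hF hclique)
  have hlt : #B + 1 ≤ Nat.sqrt (Fintype.card F) :=
    hle.lt_of_ne fun h => Nat.not_odd_iff_even.mpr (h ▸ heven) hBodd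
  have hsucc : (#B + 1) ^ 2 ≤ Fintype.card F :=
    (Nat.pow_le_pow_left hlt 2).trans (Nat.sqrt_le' _)
  have : ((#B : ℤ) + 1) ^ 2 ≤ Fintype.card F := by exact_mod_cast hsucc
  nlinarith

theorem stmt_10 {F : Type*} [Field F] [Fintype F] (p k s : ℕ)
    (hp : p.Prime) (hk : Odd k) (hcard : Fintype.card F = p ^ k)
    (hq : Fintype.card F % 4 = 1)
    (hs : IsGreatest {n : ℕ | ∃ B : Finset F,
      (∀ b₁ ∈ B, ∀ b₂ ∈ B, b₁ ≠ b₂ → b₁ - b₂ ≠ 0 ∧ IsSquare (b₁ - b₂)) ∧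
      B.card = n} s)
    (heven : Even (Nat.sqrt (Fintype.card F))) :
    (s : ℤ) ^ 2 + s - 1 ≤ (Fintype.card F : ℤ) :=
  stmt_10_general s hq hs heven
end

section
/- Let p ≡ 1 (mod 4) be prime and B ⊆ Z_p maximal with B - B ⊆ Q ∪ {0}, s = |B|. If there exist t ∉ B and an integer m ≥ 1 with Σ_{b∈B} χ(b-t) ≤ -(2m - s), i.e. |(B - t) ∩ NQ| ≥ m, then s ≤ 1 + (p-1)/(2m). -/
open scoped Classical

private lemma isSquare_of_mul_isSquare' {p : ℕ} [Fact p.Prime] {a b : ZMod p}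
    (hab : IsSquare (a * b)) (hb : IsSquare b) (hb0 : b ≠ 0) : IsSquare a := by
  obtain ⟨c, hc⟩ := hb
  obtain ⟨e, he⟩ := hab
  have hc0 : c ≠ 0 := by
    rintro rfl
    exact hb0 (by simpa using hc)
  refine ⟨e * c⁻¹, ?_⟩
  have h1 : a * (c * c) = e * e := by rw [← hc]; linear_combination he
  field_simp
  linear_combination h1

private lemma two_mul_card_nonsquares {p : ℕ} [Fact p.Prime] (hp2 : p ≠ 2) :
    2 * (Finset.univ.filter (fun x : ZMod p => ¬ IsSquare x)).card = p - 1 := by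
  haveI : NeZero p := ⟨(Fact.out : p.Prime).pos.ne'⟩
  have hchar : ringChar (ZMod p) ≠ 2 := by
    rw [ZMod.ringChar_zmod_n]; exact hp2
  have hsum : ∑ a : ZMod p, quadraticChar (ZMod p) a = 0 := quadraticChar_sum_zero hchar
  classical
  set S := Finset.univ.filter (fun x : ZMod p => IsSquare x) with hS
  set N := Finset.univ.filter (fun x : ZMod p => ¬ IsSquare x) with hN
  have hsplit : ∑ a ∈ S, quadraticChar (ZMod p) a + ∑ a ∈ N, quadraticChar (ZMod p) a = 0 := by
    rw [hS, hN, Finset.sum_filter_add_sum_filter_not]; exact hsum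
  have h0S : (0 : ZMod p) ∈ S := by
    simp only [hS, Finset.mem_filter, Finset.mem_univ, true_and]
    exact ⟨0, (mul_zero 0).symm⟩
  have hsumN : ∑ a ∈ N, quadraticChar (ZMod p) a = -(N.card : ℤ) := by
    have h : ∀ a ∈ N, quadraticChar (ZMod p) a = -1 := fun a ha =>
      quadraticChar_neg_one_iff_not_isSquare.mpr (Finset.mem_filter.mp ha).2
    rw [Finset.sum_congr rfl h, Finset.sum_const, nsmul_eq_mul, mul_neg_one]
  have hS1 : 1 ≤ S.card := Finset.card_pos.mpr ⟨0, h0S⟩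
  have hsumS : ∑ a ∈ S, quadraticChar (ZMod p) a = (S.card : ℤ) - 1 := by
    have h : ∀ a ∈ S.erase 0, quadraticChar (ZMod p) a = 1 := by
      intro a ha
      exact (quadraticChar_one_iff_isSquare (Finset.ne_of_mem_erase ha)).mpr
        (Finset.mem_filter.mp (Finset.mem_of_mem_erase ha)).2
    rw [← Finset.add_sum_erase _ _ h0S, Finset.sum_congr rfl h, Finset.sum_const,
      nsmul_eq_mul, mul_one, Finset.card_erase_of_mem h0S, quadraticChar_zero, zero_add]
    push_cast [Nat.cast_sub hS1]
    ring
  have hcards : S.card + N.card = p := by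
    have h := Finset.card_filter_add_card_filter_not
      (s := (Finset.univ : Finset (ZMod p))) (p := fun x : ZMod p => IsSquare x)
    rw [Finset.card_univ, ZMod.card] at h
    exact h
  have hSN : S.card = N.card + 1 := by
    rw [hsumS, hsumN] at hsplit
    omega
  omega

theorem stmt_17 (p : ℕ) (hp : p.Prime) (hq : p % 4 = 1)
    (B : Finset (ZMod p))
    (hB : ∀ b₁ ∈ B, ∀ b₂ ∈ B, b₁ ≠ b₂ → b₁ - b₂ ≠ 0 ∧ IsSquare (b₁ - b₂))
    (hmax : ∀ C : Finset (ZMod p),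
      (∀ c₁ ∈ C, ∀ c₂ ∈ C, c₁ ≠ c₂ → c₁ - c₂ ≠ 0 ∧ IsSquare (c₁ - c₂)) →
      B ⊆ C → C = B)
    (m : ℕ) (hm : 1 ≤ m) (t : ZMod p) (ht : t ∉ B)
    (hD : m ≤ ((B.image (fun b => b - t)).filter
      (fun x => x ≠ 0 ∧ ¬ IsSquare x)).card) :
    (B.card : ℚ) ≤ 1 + ((p : ℚ) - 1) / (2 * m) := by
  set D := (B.image (fun b => b - t)).filter (fun x => x ≠ 0 ∧ ¬ IsSquare x) with hDdef
  haveI := Fact.mk hp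
  classical
  have hp2 : p ≠ 2 := by
    intro h; rw [h] at hq; norm_num at hq
  have hD' : m ≤ D.card := hD
  have hDne : D.Nonempty := Finset.card_pos.mp (Nat.lt_of_lt_of_le hm hD')
  obtain ⟨d₀, hd₀D⟩ := hDne
  have hd₀D' := hd₀D
  rw [hDdef] at hd₀D'
  simp only [Finset.mem_filter, Finset.mem_image] at hd₀D'
  obtain ⟨⟨b₀, hb₀, -⟩, -⟩ := hd₀D'
  set N := Finset.univ.filter (fun x : ZMod p => ¬ IsSquare x) with hNdef
  have hDfact : ∀ d ∈ D, (∃ a ∈ B, a - t = d) ∧ d ≠ 0 ∧ ¬ IsSquare d := by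
    intro d hd
    rw [hDdef] at hd
    simp only [Finset.mem_filter, Finset.mem_image] at hd
    exact ⟨hd.1, hd.2⟩
  have key : D.card * (B.card - 1) ≤ N.card := by
    have hmaps : ∀ q ∈ D ×ˢ B.erase b₀, q.1 * (q.2 - b₀) ∈ N := by
      rintro ⟨d, b⟩ hq'
      obtain ⟨hdD, hbE⟩ := Finset.mem_product.mp hq'
      have hbne : b ≠ b₀ := Finset.ne_of_mem_erase hbE
      have hbB : b ∈ B := Finset.mem_of_mem_erase hbE
      obtain ⟨hbb0ne, hbb0sq⟩ := hB b hbB b₀ hb₀ hbne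
      obtain ⟨-, -, hdns⟩ := hDfact d hdD
      simp only [hNdef, Finset.mem_filter, Finset.mem_univ, true_and]
      intro habs
      exact hdns (isSquare_of_mul_isSquare' habs hbb0sq hbb0ne)
    have hinj : Set.InjOn (fun q : ZMod p × ZMod p => q.1 * (q.2 - b₀))
        ↑(D ×ˢ B.erase b₀) := by
      rintro ⟨d₁, b₁⟩ h₁ ⟨d₂, b₂⟩ h₂ heq
      simp only [Finset.coe_product, Set.mem_prod, Finset.mem_coe] at h₁ h₂
      obtain ⟨hd₁D, hb₁E⟩ := h₁
      obtain ⟨hd₂D, hb₂E⟩ := h₂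
      simp only at heq
      have hb₁B : b₁ ∈ B := Finset.mem_of_mem_erase hb₁E
      have hb₂B : b₂ ∈ B := Finset.mem_of_mem_erase hb₂E
      have hb₁ne : b₁ ≠ b₀ := Finset.ne_of_mem_erase hb₁E
      have hb₂ne : b₂ ≠ b₀ := Finset.ne_of_mem_erase hb₂E
      obtain ⟨ha₁ex, hd₁0, hd₁ns⟩ := hDfact d₁ hd₁D
      obtain ⟨ha₂ex, hd₂0, hd₂ns⟩ := hDfact d₂ hd₂D
      obtain ⟨a₁, ha₁B, ha₁⟩ := ha₁ex
      obtain ⟨a₂, ha₂B, ha₂⟩ := ha₂ex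
      have hdd : d₁ = d₂ := by
        by_contra hdd
        have haa : a₂ ≠ a₁ := by
          intro h; apply hdd; rw [← ha₁, ← ha₂, h]
        obtain ⟨hsub_ne, hsub_sq⟩ := hB a₂ ha₂B a₁ ha₁B haa
        have hsub_eq : a₂ - a₁ = d₂ - d₁ := by rw [← ha₁, ← ha₂]; ring
        rw [hsub_eq] at hsub_ne hsub_sq
        by_cases hbb : b₁ = b₂
        · rw [hbb] at heq
          obtain ⟨hbb0ne, -⟩ := hB b₂ hb₂B b₀ hb₀ hb₂ne
          exact hdd (mul_right_cancel₀ hbb0ne heq)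
        · obtain ⟨hb12ne, hb12sq⟩ := hB b₁ hb₁B b₂ hb₂B hbb
          obtain ⟨-, hb20sq⟩ := hB b₂ hb₂B b₀ hb₀ hb₂ne
          have key2 : d₁ * (b₁ - b₂) = (b₂ - b₀) * (d₂ - d₁) := by
            linear_combination heq
          have hsq : IsSquare (d₁ * (b₁ - b₂)) := by
            rw [key2]; exact hb20sq.mul hsub_sq
          exact hd₁ns (isSquare_of_mul_isSquare' hsq hb12sq hb12ne)
      subst hdd
      have hsub : b₁ - b₀ = b₂ - b₀ := mul_left_cancel₀ hd₁0 heq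
      have hb12 : b₁ = b₂ := by
        have h := congrArg (fun z => z + b₀) hsub
        simpa using h
      rw [hb12]
    have hcard := Finset.card_le_card_of_injOn _ hmaps hinj
    calc D.card * (B.card - 1)
        = (D ×ˢ B.erase b₀).card := by
          rw [Finset.card_product, Finset.card_erase_of_mem hb₀]
      _ ≤ N.card := hcard
  have hNcard : 2 * N.card = p - 1 := two_mul_card_nonsquares hp2
  have hs1 : 1 ≤ B.card := Finset.card_pos.mpr ⟨b₀, hb₀⟩
  have hmain : 2 * (m * (B.card - 1)) ≤ p - 1 := by
    have h1 : m * (B.card - 1) ≤ D.card * (B.card - 1) :=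
      Nat.mul_le_mul_right (B.card - 1) hD'
    omega
  have hp5 : 2 ≤ p := hp.two_le
  have h2m : (0 : ℚ) < 2 * m := by
    have h1 : (1 : ℚ) ≤ (m : ℚ) := by exact_mod_cast hm
    linarith
  rw [← sub_le_iff_le_add']
  rw [le_div_iff₀ h2m]
  have h' : (↑(2 * (m * (B.card - 1))) : ℚ) ≤ ↑(p - 1) := Nat.cast_le.mpr hmain
  push_cast [Nat.cast_sub hs1, Nat.cast_sub (le_trans one_le_two hp5)] at h'
  nlinarith [h']
end
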